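/- Let g ∈ ℂ[x,y] be reduced, and ∂_1 = α_1∂_x + β_1∂_y, ∂_2 = α_2∂_x + β_2∂_y two elements of Der(g). Then the determinant α_1·β_2 − α_2·β_1 is divisible by g in ℂ[x,y]. -/

import Mathlib

/-!
Cramer's rule applied to the two relations `αᵢ g_x + βᵢ g_y ∈ (g)` gives `det · g_x, det · g_y ∈ (g)`.
Hence a prime factor `p` of `g` divides `det` unless it divides both partials of `g`. That is
impossible: writing `g = p h` with `p ∤ h` (squarefree), `p ∣ ∂ᵢ g = h ∂ᵢ p + p ∂ᵢ h` forces
`p ∣ ∂ᵢ p`, so `∂ᵢ p = 0` for degree reasons; in characteristic zero `p` is then a nonzero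
constant, i.e. a unit. As `g` is squarefree, divisibility by all its prime factors suffices.
-/

open MvPolynomial

noncomputable section

/-- `Der(g)`, the module of derivations `α ∂_x + β ∂_y` of `ℂ[x,y]` preserving the
principal ideal `(g)`, identified with pairs `(α, β)`. -/
def Derg (g : MvPolynomial (Fin 2) ℂ) :
    Submodule (MvPolynomial (Fin 2) ℂ)
      (MvPolynomial (Fin 2) ℂ × MvPolynomial (Fin 2) ℂ) where
  carrier := {q | q.1 * pderiv (0 : Fin 2) g + q.2 * pderiv (1 : Fin 2) g ∈ Ideal.span {g}}
  add_mem' := by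
    intro a b ha hb
    simp only [Set.mem_setOf_eq, Prod.fst_add, Prod.snd_add] at *
    have : (a.1 + b.1) * pderiv (0 : Fin 2) g + (a.2 + b.2) * pderiv (1 : Fin 2) g =
        (a.1 * pderiv (0 : Fin 2) g + a.2 * pderiv (1 : Fin 2) g) +
        (b.1 * pderiv (0 : Fin 2) g + b.2 * pderiv (1 : Fin 2) g) := by ring
    rw [this]; exact Ideal.add_mem _ ha hb
  zero_mem' := by simp
  smul_mem' := by
    intro c a ha
    simp only [Set.mem_setOf_eq, Prod.smul_fst, Prod.smul_snd, smul_eq_mul] at *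
    have : c * a.1 * pderiv (0 : Fin 2) g + c * a.2 * pderiv (1 : Fin 2) g =
        c * (a.1 * pderiv (0 : Fin 2) g + a.2 * pderiv (1 : Fin 2) g) := by ring
    rw [this]; exact Ideal.mul_mem_left _ _ ha

theorem Squarefree.dvd_of_forall_prime_dvd {M : Type*} [CommMonoidWithZero M]
    [Nontrivial M] [UniqueFactorizationMonoid M] {g d : M} (hg : Squarefree g)
    (H : ∀ p : M, Prime p → p ∣ g → p ∣ d) : g ∣ d := by
  induction g using UniqueFactorizationMonoid.induction_on_prime with
  | h₁ => exact absurd hg not_squarefree_zero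
  | h₂ u hu => exact hu.dvd
  | h₃ a p _ hp ih =>
    obtain ⟨hpa, -, ha⟩ := squarefree_mul_iff.mp hg
    exact hpa.mul_dvd (H p hp (dvd_mul_right p a))
      (ih ha fun q hq hqa => H q hq (hqa.mul_left p))

theorem Prime.dvd_derivation_of_dvd_derivation_mul {R A : Type*} [CommSemiring R] [CommRing A]
    [Algebra R A] (D : Derivation R A A) {p h : A} (hp : Prime p) (hph : ¬p ∣ h)
    (hd : p ∣ D (p * h)) : p ∣ D p := by
  rw [D.leibniz, smul_eq_mul, smul_eq_mul] at hd
  exact (hp.dvd_or_dvd ((dvd_add_right (dvd_mul_right p _)).mp hd)).resolve_left hph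

namespace MvPolynomial

variable {σ R : Type*}

theorem totalDegree_pderiv_lt [CommSemiring R] {i : σ} {p : MvPolynomial σ R}
    (h : pderiv i p ≠ 0) : (pderiv i p).totalDegree < p.totalDegree := by
  have hle : ∀ m ∈ (pderiv i p).support, (m.sum fun _ e => e) + 1 ≤ p.totalDegree := by
    intro m hm
    rw [mem_support_iff, coeff_pderiv] at hm
    have := le_totalDegree (mem_support_iff.mpr (left_ne_zero_of_mul hm))
    simpa [Finsupp.sum_add_index'] using this
  obtain ⟨m, hm⟩ := support_nonempty.mpr h
  rw [totalDegree, Finset.sup_lt_iff ((Nat.succ_pos _).trans_le (hle m hm))]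
  exact fun m hm => hle m hm

theorem pderiv_eq_zero_of_dvd_pderiv [CommRing R] [IsDomain R] {i : σ} {p : MvPolynomial σ R}
    (h : p ∣ pderiv i p) : pderiv i p = 0 := by
  by_contra hne
  obtain ⟨c, hc⟩ := h
  have hlt := totalDegree_pderiv_lt hne
  rw [hc] at hne hlt
  rw [totalDegree_mul_of_isDomain (left_ne_zero_of_mul hne) (right_ne_zero_of_mul hne)] at hlt
  omega

theorem eq_C_of_forall_pderiv_eq_zero [CommSemiring R] [NoZeroDivisors R] [CharZero R]
    {p : MvPolynomial σ R} (h : ∀ i, pderiv i p = 0) : p = C (p.coeff 0) := by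
  classical
  ext m
  rw [coeff_C]
  split_ifs with hm
  · rw [hm]
  obtain ⟨i, hi⟩ := Finsupp.support_nonempty_iff.mpr (Ne.symm hm)
  have hcoeff := coeff_pderiv p (m - Finsupp.single i 1) (i := i)
  rw [h i, coeff_zero, tsub_add_cancel_of_le (Finsupp.single_le_iff.mpr
    (Nat.one_le_iff_ne_zero.mpr (Finsupp.mem_support_iff.mp hi)))] at hcoeff
  exact (mul_eq_zero.mp hcoeff.symm).resolve_right (Nat.cast_add_one_ne_zero _)

theorem _root_.Squarefree.exists_not_dvd_pderiv [Field R] [CharZero R] {g p : MvPolynomial σ R}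
    (hg : Squarefree g) (hp : Prime p) (hpg : p ∣ g) : ∃ i, ¬p ∣ pderiv i g := by
  by_contra! H
  obtain ⟨h, rfl⟩ := hpg
  have hph : ¬p ∣ h := fun hd => hp.not_isUnit (hg p (mul_dvd_mul_left p hd))
  have hp_const := eq_C_of_forall_pderiv_eq_zero fun i =>
    pderiv_eq_zero_of_dvd_pderiv (hp.dvd_derivation_of_dvd_derivation_mul (pderiv i) hph (H i))
  have hp0 : p.coeff 0 ≠ 0 := fun h0 => hp.ne_zero (by rw [hp_const, h0, map_zero])
  exact hp.not_isUnit (hp_const ▸ (isUnit_iff_ne_zero.mpr hp0).map C)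

end MvPolynomial

theorem dvd_det_mul_pderiv_of_mem_Derg {g α₁ β₁ α₂ β₂ : MvPolynomial (Fin 2) ℂ}
    (h₁ : (α₁, β₁) ∈ Derg g) (h₂ : (α₂, β₂) ∈ Derg g) (i : Fin 2) :
    g ∣ (α₁ * β₂ - α₂ * β₁) * pderiv i g := by
  obtain ⟨a, ha⟩ := Ideal.mem_span_singleton.mp h₁
  obtain ⟨b, hb⟩ := Ideal.mem_span_singleton.mp h₂
  match i with
  | 0 => exact ⟨a * β₂ - b * β₁, by linear_combination β₂ * ha - β₁ * hb⟩
  | 1 => exact ⟨b * α₁ - a * α₂, by linear_combination α₁ * hb - α₂ * ha⟩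

/-- Let `g ∈ ℂ[x,y]` be reduced (squarefree), and
`∂_1 = α_1∂_x + β_1∂_y`, `∂_2 = α_2∂_x + β_2∂_y` two elements of `Der(g)`.
Then `g` divides the determinant `α_1·β_2 − α_2·β_1`. -/
theorem g_dvd_det (g : MvPolynomial (Fin 2) ℂ) (hg : Squarefree g)
    (α₁ β₁ α₂ β₂ : MvPolynomial (Fin 2) ℂ)
    (h₁ : (α₁, β₁) ∈ Derg g) (h₂ : (α₂, β₂) ∈ Derg g) :
    g ∣ α₁ * β₂ - α₂ * β₁ := by
  refine hg.dvd_of_forall_prime_dvd fun p hp hpg => ?_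
  obtain ⟨i, hi⟩ := hg.exists_not_dvd_pderiv hp hpg
  exact (hp.dvd_or_dvd (hpg.trans (dvd_det_mul_pderiv_of_mem_Derg h₁ h₂ i))).resolve_right hi
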